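/- Σ over integers m,n ≥ 1 with m odd of 1/(m²·n²·(m+n)²·(m+2n)²) = π⁸/322560. -/

import Mathlib

open Real Finset Filter Topology

/-!
Put `x = m` and `y = m + 2n`: the pairs `(m, n)` are the pairs of odd integers `0 < x < y`, and the
summand becomes `16 / (x²y²(x² - y²)²)`, which is symmetric in `x, y`. So the sum is half the sum
over all ordered pairs of distinct odd `x, y`. For fixed `x`, partial fractions in `y` split the
inner sum into `∑ 1/y²` over odd `y`, a sum of `1/k²` over all `k ∈ ℤ`, and a telescoping sum that
vanishes; it equals `(7π²/3)/x⁶ - 23/x⁸`. Summing over odd `x` with `∑ 1/x⁶ = π⁶/960` and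
`∑ 1/x⁸ = 17π⁸/161280` gives `π⁸/161280`.
-/

theorem bernoulli'_six : bernoulli' 6 = 1 / 42 := by
  rw [bernoulli'_def]
  norm_num [sum_range_succ, Nat.choose, bernoulli'_eq_zero_of_odd (by decide : Odd 5)]

theorem bernoulli'_eight : bernoulli' 8 = -1 / 30 := by
  rw [bernoulli'_def]
  norm_num [sum_range_succ, Nat.choose, bernoulli'_six,
    bernoulli'_eq_zero_of_odd (by decide : Odd 5), bernoulli'_eq_zero_of_odd (by decide : Odd 7)]

theorem hasSum_zeta_six : HasSum (fun n : ℕ => 1 / (n : ℝ) ^ 6) (π ^ 6 / 945) := by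
  convert hasSum_zeta_nat three_ne_zero using 1
  rw [bernoulli_eq_bernoulli'_of_ne_one (by decide), bernoulli'_six]
  norm_num [Nat.factorial]
  ring

theorem hasSum_zeta_eight : HasSum (fun n : ℕ => 1 / (n : ℝ) ^ 8) (π ^ 8 / 9450) := by
  convert hasSum_zeta_nat four_ne_zero using 1
  rw [bernoulli_eq_bernoulli'_of_ne_one (by decide), bernoulli'_eight]
  norm_num [Nat.factorial]
  ring

theorem HasSum.one_div_two_mul_add_one_pow {p : ℕ} {a : ℝ}
    (h : HasSum (fun n : ℕ => 1 / (n : ℝ) ^ p) a) :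
    HasSum (fun n : ℕ => 1 / (2 * (n : ℝ) + 1) ^ p) ((1 - 1 / 2 ^ p) * a) := by
  set f : ℕ → ℝ := fun n => 1 / (n : ℝ) ^ p
  have heven : HasSum (fun n => f (2 * n)) (1 / 2 ^ p * a) := by
    refine (h.mul_left (1 / 2 ^ p)).congr_fun fun n => ?_
    simp only [f, Nat.cast_mul, Nat.cast_ofNat, mul_pow, one_div_mul_one_div]
  have hodd : HasSum (fun n => f (2 * n + 1)) (∑' n, f (2 * n + 1)) :=
    (h.summable.comp_injective (i := fun n : ℕ => 2 * n + 1)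
      fun m n hmn => by simpa using hmn).hasSum
  have hvalue := (heven.even_add_odd hodd).unique h
  convert hodd using 1
  · simp only [f, Nat.cast_add, Nat.cast_mul, Nat.cast_ofNat, Nat.cast_one]
  · linarith

theorem hasSum_one_div_two_mul_add_one_sq :
    HasSum (fun n : ℕ => 1 / (2 * (n : ℝ) + 1) ^ 2) (π ^ 2 / 8) := by
  convert hasSum_zeta_two.one_div_two_mul_add_one_pow using 1; ring

theorem hasSum_one_div_two_mul_add_one_pow_six :
    HasSum (fun n : ℕ => 1 / (2 * (n : ℝ) + 1) ^ 6) (π ^ 6 / 960) := by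
  convert hasSum_zeta_six.one_div_two_mul_add_one_pow using 1; ring

theorem hasSum_one_div_two_mul_add_one_pow_eight :
    HasSum (fun n : ℕ => 1 / (2 * (n : ℝ) + 1) ^ 8) (17 * π ^ 8 / 161280) := by
  convert hasSum_zeta_eight.one_div_two_mul_add_one_pow using 1; ring

theorem hasSum_sub_add_nat_of_tendsto_zero {G : Type*} [AddCommGroup G] [TopologicalSpace G]
    [IsTopologicalAddGroup G] [T2Space G] {f : ℕ → G} (hf : Tendsto f atTop (𝓝 0)) (k : ℕ)
    (hs : Summable fun n => f n - f (n + k)) :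
    HasSum (fun n => f n - f (n + k)) (∑ i ∈ range k, f i) := by
  have hpartial : ∀ n, ∑ i ∈ range n, (f i - f (i + k)) =
      ∑ i ∈ range k, f i - ∑ i ∈ range k, f (n + i) := by
    intro n
    have h₁ := sum_range_add f k n
    have h₂ := sum_range_add f n k
    rw [add_comm k n] at h₁
    simp only [sum_sub_distrib, add_comm _ k]
    rw [eq_sub_iff_add_eq, sub_add_eq_add_sub, sub_eq_iff_eq_add, ← h₂, h₁, add_comm]
  have htail : Tendsto (fun n => ∑ i ∈ range k, f (n + i)) atTop (𝓝 0) := by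
    simpa using tendsto_finsetSum (range k) fun i _ => hf.comp (tendsto_add_atTop_nat i)
  rw [hs.hasSum_iff_tendsto_nat]
  simp only [hpartial]
  simpa using tendsto_const_nhds.sub htail

theorem summable_one_div_sub_sub_one_div_add (i : ℕ) :
    Summable fun j : ℕ => 1 / ((j : ℝ) - i) - 1 / ((j : ℝ) + i + 1) := by
  have htail : ∀ t : ℕ, 1 / (((t + (i + 1) : ℕ) : ℝ) - i) - 1 / (((t + (i + 1) : ℕ) : ℝ) + i + 1) =
      (2 * i + 1) / ((t + 1) * (t + 2 * i + 2)) := fun t => by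
    push_cast
    rw [show (t : ℝ) + (i + 1) - i = t + 1 by ring,
      show (t : ℝ) + (i + 1) + i + 1 = t + 2 * i + 2 by ring]
    field_simp
    ring
  have hsq : Summable fun t : ℕ => (2 * i + 1 : ℝ) * (1 / ((t + 1 : ℕ) : ℝ) ^ 2) :=
    ((summable_nat_add_iff 1).2 (Real.summable_one_div_nat_pow.2 one_lt_two)).mul_left _
  refine (summable_nat_add_iff (i + 1)).1 (hsq.of_nonneg_of_le (fun t => ?_) fun t => ?_)
  · rw [htail]; positivity
  · rw [htail, div_eq_mul_one_div]
    push_cast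
    gcongr
    nlinarith

/-- It telescopes to `∑ j ≤ 2i, 1 / (j - i)`, which is odd under `j ↦ 2i - j` (its middle term is
`1 / 0 = 0`). -/
theorem hasSum_one_div_sub_sub_one_div_add (i : ℕ) :
    HasSum (fun j : ℕ => 1 / ((j : ℝ) - i) - 1 / ((j : ℝ) + i + 1)) 0 := by
  set g : ℕ → ℝ := fun j => 1 / ((j : ℝ) - i)
  have hshift : ∀ j : ℕ, 1 / ((j : ℝ) - i) - 1 / ((j : ℝ) + i + 1) = g j - g (j + (2 * i + 1)) :=
    fun j => by simp only [g]; push_cast; ring_nf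
  have hg : Tendsto g atTop (𝓝 0) := by
    refine (tendsto_inv_atTop_zero.comp (tendsto_atTop_add_const_right _ (-(i : ℝ))
      tendsto_natCast_atTop_atTop)).congr fun j => ?_
    simp [g, sub_eq_add_neg]
  have hcancel : ∑ j ∈ range (2 * i + 1), g j = 0 := by
    have hneg : ∑ j ∈ range (2 * i + 1), g (2 * i + 1 - 1 - j) = -∑ j ∈ range (2 * i + 1), g j := by
      rw [← sum_neg_distrib]
      refine sum_congr rfl fun j hj => ?_
      have hj : j ≤ 2 * i := by rw [mem_range] at hj; omega
      simp only [g]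
      rw [show 2 * i + 1 - 1 - j = 2 * i - j by omega, Nat.cast_sub hj, ← div_neg]
      push_cast; ring_nf
    linarith [sum_range_reflect g (2 * i + 1)]
  have h := hasSum_sub_add_nat_of_tendsto_zero hg (2 * i + 1)
    ((summable_one_div_sub_sub_one_div_add i).congr hshift)
  rw [hcancel] at h
  exact h.congr_fun hshift

/-- `j ↦ j - i` and `j ↦ -(j + i + 1)` together enumerate `ℤ` once (the term `1 / 0` is `0`). -/
theorem hasSum_one_div_sub_sq_add_one_div_add_sq (i : ℕ) :
    HasSum (fun j : ℕ => 1 / ((j : ℝ) - i) ^ 2 + 1 / ((j : ℝ) + i + 1) ^ 2) (π ^ 2 / 3) := by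
  have hint : HasSum (fun k : ℤ => 1 / (k : ℝ) ^ 2) (π ^ 2 / 3) := by
    have h := HasSum.of_nat_of_neg (f := fun k : ℤ => 1 / (k : ℝ) ^ 2)
      (by simpa using hasSum_zeta_two) (by simpa using hasSum_zeta_two)
    rwa [show π ^ 2 / 6 + π ^ 2 / 6 - 1 / ((0 : ℤ) : ℝ) ^ 2 = π ^ 2 / 3 by simp; ring] at h
  refine ((Equiv.subRight (i : ℤ)).hasSum_iff.2 hint).nat_add_neg_add_one.congr_fun fun j => ?_
  simp only [Function.comp_apply, Equiv.subRight_apply]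
  push_cast
  ring

/-- For `x = 2i + 1`, `y = 2j + 1` this is `16 / (x²y²(x² - y²)²)`; on the diagonal it is
`1 / 0 = 0`. -/
noncomputable def oddPairTerm (i j : ℕ) : ℝ :=
  1 / ((2 * (i : ℝ) + 1) ^ 2 * (2 * (j : ℝ) + 1) ^ 2 * ((j : ℝ) - i) ^ 2 * ((j : ℝ) + i + 1) ^ 2)

theorem oddPairTerm_nonneg (i j : ℕ) : 0 ≤ oddPairTerm i j := by
  unfold oddPairTerm; positivity

theorem oddPairTerm_comm (i j : ℕ) : oddPairTerm i j = oddPairTerm j i := by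
  unfold oddPairTerm; ring_nf

theorem oddPairTerm_self (i : ℕ) : oddPairTerm i i = 0 := by
  simp [oddPairTerm]

/-- On the diagonal every `1 / 0` on the right is `0` and the correction term cancels the rest. -/
theorem oddPairTerm_eq_partialFractions (i j : ℕ) :
    oddPairTerm i j =
      -6 / (2 * (i : ℝ) + 1) ^ 7 * (1 / ((j : ℝ) - i) - 1 / ((j : ℝ) + i + 1))
      + 1 / (2 * (i : ℝ) + 1) ^ 6 * (1 / ((j : ℝ) - i) ^ 2 + 1 / ((j : ℝ) + i + 1) ^ 2)
      + 16 / (2 * (i : ℝ) + 1) ^ 6 * (1 / (2 * (j : ℝ) + 1) ^ 2)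
      - if j = i then 23 / (2 * (i : ℝ) + 1) ^ 8 else 0 := by
  have ha : 2 * (i : ℝ) + 1 ≠ 0 := by positivity
  have hb : 2 * (j : ℝ) + 1 ≠ 0 := by positivity
  have hc : (j : ℝ) + i + 1 ≠ 0 := by positivity
  unfold oddPairTerm
  split_ifs with hji
  · subst hji
    rw [sub_self, show (j : ℝ) + j + 1 = 2 * j + 1 by ring]
    field_simp
    ring
  · have hd : (j : ℝ) - i ≠ 0 := sub_ne_zero.2 (Nat.cast_injective.ne hji)
    field_simp
    ring

theorem hasSum_oddPairTerm (i : ℕ) :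
    HasSum (oddPairTerm i)
      (7 * π ^ 2 / 3 / (2 * (i : ℝ) + 1) ^ 6 - 23 / (2 * (i : ℝ) + 1) ^ 8) := by
  have h := ((((hasSum_one_div_sub_sub_one_div_add i).mul_left (-6 / (2 * (i : ℝ) + 1) ^ 7)).add
    ((hasSum_one_div_sub_sq_add_one_div_add_sq i).mul_left (1 / (2 * (i : ℝ) + 1) ^ 6))).add
    (hasSum_one_div_two_mul_add_one_sq.mul_left (16 / (2 * (i : ℝ) + 1) ^ 6))).sub
    (hasSum_ite_eq i (23 / (2 * (i : ℝ) + 1) ^ 8))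
  convert! h.congr_fun (oddPairTerm_eq_partialFractions i) using 1
  ring

theorem hasSum_uncurry_oddPairTerm :
    HasSum (Function.uncurry oddPairTerm) (π ^ 8 / 161280) := by
  have houter : HasSum (fun i : ℕ => ∑' j, oddPairTerm i j) (π ^ 8 / 161280) := by
    simp only [fun i => (hasSum_oddPairTerm i).tsum_eq]
    have h := (hasSum_one_div_two_mul_add_one_pow_six.mul_left (7 * π ^ 2 / 3)).sub
      (hasSum_one_div_two_mul_add_one_pow_eight.mul_left 23)
    convert! h using 1
    · funext i; ring
    · ring
  have hsummable : Summable (Function.uncurry oddPairTerm) :=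
    (summable_prod_of_nonneg fun p => oddPairTerm_nonneg p.1 p.2).2
      ⟨fun i => (hasSum_oddPairTerm i).summable, houter.summable⟩
  rw [hsummable.hasSum_iff, hsummable.tsum_prod' fun i => (hasSum_oddPairTerm i).summable]
  exact houter.tsum_eq

theorem injective_strictUpper :
    Function.Injective fun p : ℕ × ℕ => (p.1, p.1 + p.2 + 1) := by
  intro p q hpq
  simp only [Prod.mk.injEq] at hpq
  exact Prod.ext hpq.1 (by omega)

theorem HasSum.of_strictUpper_of_symm {M : Type*} [AddCommMonoid M] [TopologicalSpace M]
    [ContinuousAdd M] {f : ℕ × ℕ → M} {t : M} (hsymm : ∀ a b, f (a, b) = f (b, a))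
    (hdiag : ∀ a, f (a, a) = 0) (h : HasSum (fun p : ℕ × ℕ => f (p.1, p.1 + p.2 + 1)) t) :
    HasSum f (t + t) := by
  set upper : ℕ × ℕ → M := fun p => if p.1 < p.2 then f p else 0
  have hupper : HasSum upper t := by
    have hvanish : ∀ p ∉ Set.range fun p : ℕ × ℕ => (p.1, p.1 + p.2 + 1), upper p = 0 :=
      fun p hp => if_neg fun hlt => hp ⟨(p.1, p.2 - p.1 - 1), Prod.ext rfl (by simp only; omega)⟩
    refine (injective_strictUpper.hasSum_iff hvanish).1 (h.congr_fun fun p => if_pos ?_)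
    simp only; omega
  have hlower : HasSum (upper ∘ Prod.swap) t := (Equiv.prodComm ℕ ℕ).hasSum_iff.2 hupper
  refine (hupper.add hlower).congr_fun fun ⟨a, b⟩ => ?_
  simp only [upper, Function.comp_apply, Prod.swap_prod_mk]
  rcases lt_trichotomy a b with hab | rfl | hab
  · simp [hab, hab.not_gt]
  · simp [hdiag]
  · simp [hab, hab.not_gt, hsymm a b]

theorem tsum_ite_succ_fst_mod_two_eq_one {M : Type*} [AddCommMonoid M] [TopologicalSpace M]
    (g : ℕ × ℕ → M) :
    ∑' p : ℕ × ℕ, (if (p.1 + 1) % 2 = 1 then g p else 0) = ∑' p : ℕ × ℕ, g (2 * p.1, p.2) := by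
  have hinj : Function.Injective fun p : ℕ × ℕ => (2 * p.1, p.2) := by
    intro p q hpq
    simp only [Prod.mk.injEq] at hpq
    exact Prod.ext (by omega) hpq.2
  rw [← hinj.tsum_eq fun p hp => ⟨(p.1 / 2, p.2), Prod.ext ?_ rfl⟩]
  · exact tsum_congr fun p => if_pos (by simp only; omega)
  · have hodd : (p.1 + 1) % 2 = 1 := not_not.1 fun h => hp (if_neg h)
    simp only; omega

/-- The value ζ₂PSp2(2,2,2,2): the sum over m,n ≥ 1 with m odd of
1/(m²n²(m+n)²(m+2n)²) equals π⁸/322560. -/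
theorem zeta2_PSp2_two_two_two_two :
    (∑' pr : ℕ × ℕ, (if (pr.1 + 1) % 2 = 1 then
      (1 : ℝ) / (((pr.1 : ℝ) + 1) ^ 2 * ((pr.2 : ℝ) + 1) ^ 2
        * ((pr.1 : ℝ) + (pr.2 : ℝ) + 2) ^ 2
        * ((pr.1 : ℝ) + 2 * (pr.2 : ℝ) + 3) ^ 2) else 0))
    = Real.pi ^ 8 / 322560 := by
  obtain ⟨t, ht⟩ := hasSum_uncurry_oddPairTerm.summable.comp_injective injective_strictUpper
  have htwice := (ht.of_strictUpper_of_symm oddPairTerm_comm oddPairTerm_self).unique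
    hasSum_uncurry_oddPairTerm
  refine (tsum_ite_succ_fst_mod_two_eq_one _).trans ?_
  rw [show π ^ 8 / 322560 = t by linarith, ← ht.tsum_eq]
  refine tsum_congr fun p => ?_
  simp only [Function.comp_apply, Function.uncurry_apply_pair, oddPairTerm]
  push_cast
  ring_nf
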